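/- arXiv:1101.0177 — 2 statements merged into one kernel-verified Lean document; each statement's English description precedes it below -/
import Mathlib

section
/- Let A be a commutative C*-algebra and n ≥ 1. If S = [sᵢⱼ] and T = [tᵢⱼ] are positive elements of the C*-algebra Mₙ(A) of n×n matrices over A, then their Schur (entrywise) product [sᵢⱼ·tᵢⱼ] is a positive element of Mₙ(A). -/
/-!
Statement 6.  In the C*-algebra `Mₙ(A)` of matrices over a *commutative* C*-algebra `A`,
the Schur (entrywise) product of two positive elements is positive.  An element `x` is
positive iff `x = y* * y` for some `y`.
-/

noncomputable section

open scoped Matrix.Norms.L2Operator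
open WeakDual Unitization

namespace SchurProductAux

instance matComplete {n : ℕ} : CompleteSpace (Matrix (Fin n) (Fin n) ℂ) :=
  FiniteDimensional.complete ℂ _

instance matCStarAlgebra {n : ℕ} : CStarAlgebra (Matrix (Fin n) (Fin n) ℂ) where

lemma inr_sum' {R B : Type*} [AddCommMonoid R] [AddCommMonoid B] {ι : Type*}
    (s : Finset ι) (f : ι → B) :
    (↑(∑ i ∈ s, f i) : Unitization R B) = ∑ i ∈ s, (↑(f i) : Unitization R B) := by
  classical
  induction s using Finset.induction_on with
  | empty => simp [Unitization.inr_zero]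
  | insert _ _ h ih => simp [Finset.sum_insert h, Unitization.inr_add, ih]

lemma fst_sum' {R B : Type*} [AddCommMonoid R] [AddCommMonoid B] {ι : Type*}
    (s : Finset ι) (f : ι → Unitization R B) :
    (∑ i ∈ s, f i).fst = ∑ i ∈ s, (f i).fst := by
  classical
  induction s using Finset.induction_on with
  | empty => simp [Unitization.fst_zero]
  | insert _ _ h ih => simp [Finset.sum_insert h, Unitization.fst_add, ih]

lemma exists_factor {B : Type*} [CStarAlgebra B] {ι : Type*} [Fintype ι] (b : ι → B) :
    ∃ c : B, ∑ p, star (b p) * b p = star c * c := by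
  let _ := CStarAlgebra.spectralOrder B
  have _ := CStarAlgebra.spectralOrderedRing B
  have hx : (0:B) ≤ ∑ p, star (b p) * b p :=
    Finset.sum_nonneg fun p _ => star_mul_self_nonneg _
  exact ⟨CFC.sqrt _, by
    rw [(IsSelfAdjoint.of_nonneg (CFC.sqrt_nonneg _)).star_eq, CFC.sqrt_mul_sqrt_self _ hx]⟩

end SchurProductAux

open SchurProductAux in
/-- The Schur product of two positive elements of `Mₙ(A)`
(`A` a commutative C*-algebra) is positive. -/
theorem schurProduct_positive_commutative_cstar
    {A : Type*} [NonUnitalCommCStarAlgebra A]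
    {n : ℕ} (hn : 1 ≤ n) (S T : Matrix (Fin n) (Fin n) A)
    (hS : ∃ y : Matrix (Fin n) (Fin n) A, S = y.conjTranspose * y)
    (hT : ∃ y : Matrix (Fin n) (Fin n) A, T = y.conjTranspose * y) :
    ∃ z : Matrix (Fin n) (Fin n) A,
      Matrix.of (fun i j => S i j * T i j) = z.conjTranspose * z := by
  classical
  obtain ⟨y, hy⟩ := hS
  obtain ⟨w, hw⟩ := hT
  set i0 : Fin n := ⟨0, hn⟩ with hi0
  -- step 1 : algebraic Schur factorization with n² rows
  set a : Fin n × Fin n → Fin n → A := fun p j => y p.1 j * w p.2 j with ha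
  have key : ∀ i j : Fin n, S i j * T i j = ∑ p : Fin n × Fin n, star (a p i) * a p j := by
    intro i j
    have hS' : S i j = ∑ k, star (y k i) * y k j := by
      rw [hy]; simp [Matrix.mul_apply, Matrix.conjTranspose_apply]
    have hT' : T i j = ∑ l, star (w l i) * w l j := by
      rw [hw]; simp [Matrix.mul_apply, Matrix.conjTranspose_apply]
    rw [hS', hT', Finset.sum_mul_sum, Fintype.sum_prod_type]
    refine Finset.sum_congr rfl fun k _ => Finset.sum_congr rfl fun l _ => ?_
    simp only [ha, star_mul]
    simp [mul_assoc, mul_comm, mul_left_comm]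
  -- step 2 : move to C(X, Mₙ(ℂ)) via unitization + Gelfand
  let A1 := Unitization ℂ A
  let X := characterSpace ℂ A1
  let G := gelfandStarTransform A1
  let g : A → C(X, ℂ) := fun u => G (↑u : A1)
  have hgmul : ∀ u v : A, g (u * v) = g u * g v := by
    intro u v; simp [g, Unitization.inr_mul, map_mul]
  have hgstar : ∀ u : A, g (star u) = star (g u) := by
    intro u; simp [g, Unitization.inr_star, map_star]
  -- the row-embedded matrices
  let b : Fin n × Fin n → C(X, Matrix (Fin n) (Fin n) ℂ) := fun p =>
    ⟨fun x => Matrix.of fun i j => if i = i0 then g (a p j) x else 0, by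
      apply continuous_matrix
      intro i j
      dsimp only [Matrix.of_apply]
      split_ifs
      · exact (g (a _ j)).continuous
      · exact continuous_const⟩
  let PhiM : C(X, Matrix (Fin n) (Fin n) ℂ) :=
    ⟨fun x => Matrix.of fun i j => g (S i j * T i j) x, by
      apply continuous_matrix
      intro i j
      exact (g (S i j * T i j)).continuous⟩
  have hsum : ∑ p : Fin n × Fin n, star (b p) * b p = PhiM := by
    ext x i j
    simp only [ContinuousMap.coe_sum, Finset.sum_apply, Matrix.sum_apply,
      ContinuousMap.mul_apply, ContinuousMap.star_apply, Matrix.mul_apply,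
      Matrix.star_apply, b, PhiM, ContinuousMap.coe_mk, Matrix.of_apply]
    have : ∀ p : Fin n × Fin n,
        (∑ k, star (if k = i0 then g (a p i) x else 0) *
          (if k = i0 then g (a p j) x else 0)) = star (g (a p i) x) * g (a p j) x := by
      intro p
      rw [Finset.sum_eq_single i0]
      · simp
      · intro k _ hk; simp [hk]
      · simp
    rw [Finset.sum_congr rfl fun p _ => this p]
    have : ∑ p : Fin n × Fin n, star (g (a p i) x) * g (a p j) x
        = g (∑ p : Fin n × Fin n, star (a p i) * a p j) x := by
      have hcoe : (↑(∑ p : Fin n × Fin n, star (a p i) * a p j) : A1)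
          = ∑ p : Fin n × Fin n, (↑(star (a p i) * a p j) : A1) :=
        SchurProductAux.inr_sum' _ _
      have hg : g (∑ p : Fin n × Fin n, star (a p i) * a p j)
          = ∑ p : Fin n × Fin n, star (g (a p i)) * g (a p j) := by
        simp only [g, hcoe, map_sum]
        refine Finset.sum_congr rfl fun p _ => ?_
        simp [Unitization.inr_mul, Unitization.inr_star, map_mul, map_star]
      rw [hg]
      simp
    rw [this, key]
  obtain ⟨c, hc⟩ := exists_factor b
  rw [hsum] at hc
  -- step 3 : pull back the square root
  let e : Fin n → Fin n → C(X, ℂ) := fun k j => ⟨fun x => c x k j, c.continuous.matrix_elem k j⟩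
  let z1 : Fin n → Fin n → A1 := fun k j => G.symm (e k j)
  have hz1 : ∀ i j : Fin n, ∑ k, star (z1 k i) * z1 k j = (↑(S i j * T i j) : A1) := by
    intro i j
    have h1 : G (∑ k, star (z1 k i) * z1 k j) = ∑ k, star (e k i) * e k j := by
      rw [map_sum]
      refine Finset.sum_congr rfl fun k _ => ?_
      simp [z1, map_mul, map_star]
    have h2 : (∑ k, star (e k i) * e k j) = g (S i j * T i j) := by
      ext x
      have := congrArg (fun f : C(X, Matrix (Fin n) (Fin n) ℂ) => f x i j) hc
      simp only [ContinuousMap.mul_apply, ContinuousMap.star_apply, Matrix.mul_apply,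
        Matrix.star_apply, PhiM, ContinuousMap.coe_mk, Matrix.of_apply] at this
      simpa [e, ContinuousMap.coe_sum, Finset.sum_apply] using this.symm
    exact G.injective (h1.trans h2)
  have hfst : ∀ k j : Fin n, (z1 k j).fst = 0 := by
    intro k j
    have h0 : ∑ k', (starRingEnd ℂ) ((z1 k' j).fst) * (z1 k' j).fst = 0 := by
      have h := congrArg (fun x : A1 => x.fst) (hz1 j j)
      have hfsum : (∑ k', star (z1 k' j) * z1 k' j).fst
          = ∑ k', (star (z1 k' j) * z1 k' j).fst :=
        SchurProductAux.fst_sum' _ _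
      rw [hfsum] at h
      exact h
    have h0' : ∑ k', Complex.normSq ((z1 k' j).fst) = 0 := by
      have : ((∑ k', Complex.normSq ((z1 k' j).fst) : ℝ) : ℂ) = 0 := by
        push_cast
        rw [← h0]
        refine Finset.sum_congr rfl fun k' _ => ?_
        rw [Complex.normSq_eq_conj_mul_self]
      exact_mod_cast this
    have := (Finset.sum_eq_zero_iff_of_nonneg
      (fun k' _ => Complex.normSq_nonneg ((z1 k' j).fst))).mp h0' k (Finset.mem_univ k)
    exact Complex.normSq_eq_zero.mp this
  have hinr : ∀ k j : Fin n, ((↑((z1 k j).snd) : A1)) = z1 k j := by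
    intro k j
    have h := Unitization.inl_fst_add_inr_snd_eq (z1 k j)
    rw [hfst k j] at h
    simpa using h
  refine ⟨Matrix.of fun k j => (z1 k j).snd, ?_⟩
  ext i j
  apply Unitization.inr_injective (R := ℂ)
  have : (↑(((Matrix.of fun k j => (z1 k j).snd).conjTranspose *
      (Matrix.of fun k j => (z1 k j).snd)) i j) : A1) = ∑ k, star (z1 k i) * z1 k j := by
    simp only [Matrix.mul_apply, Matrix.conjTranspose_apply, Matrix.of_apply]
    have hcoe : (↑(∑ k, star ((z1 k i).snd) * (z1 k j).snd) : A1)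
        = ∑ k, (↑(star ((z1 k i).snd) * (z1 k j).snd) : A1) :=
      SchurProductAux.inr_sum' _ _
    rw [hcoe]
    refine Finset.sum_congr rfl fun k _ => ?_
    simp only [Unitization.inrNonUnitalStarAlgHom_apply, Unitization.inr_mul,
      Unitization.inr_star, hinr]
  rw [this, hz1]
  simp

end
end

section
/- Let H and K̃ be complex Hilbert spaces with H nonzero, I an index set, and X : ℓ²(I;H) → K̃ a bounded operator. For u ∈ ℓ²(I) let E_u : H → ℓ²(I;H) be the bounded operator v ↦ (u(i)·v)_{i∈I}, and define φ(u) := X ∘ E_u ∈ B(H;K̃). Then: (a) if X is injective, the linear map u ↦ φ(u) from ℓ²(I) to B(H;K̃) is injective; (b) if X is isometric then φ is completely isometric, i.e. for every n ≥ 1 and every n×n matrix [uₖₗ] of vectors of ℓ²(I), the operator [X ∘ E_{uₖₗ}] : Hⁿ → K̃ⁿ (acting by (ξₗ)ₗ ↦ (Σₗ X(E_{uₖₗ} ξₗ))ₖ on ℓ²-direct sums) has the same norm as the operator ℂⁿ → ℓ²(I)ⁿ, c ↦ (Σₗ cₗ·uₖₗ)ₖ, where ℂⁿ carries the Euclidean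 norm. -/
noncomputable section

open ContinuousLinearMap
open scoped ENNReal

abbrev l2 (I : Type*) (H : Type*) [NormedAddCommGroup H] [InnerProductSpace ℂ H] : Type _ :=
  lp (fun _ : I => H) 2

variable {I : Type*} [DecidableEq I]
variable {H K : Type*} [NormedAddCommGroup H] [InnerProductSpace ℂ H] [CompleteSpace H]
  [NormedAddCommGroup K] [InnerProductSpace ℂ K] [CompleteSpace K]

def inclCLM (H : Type*) [NormedAddCommGroup H] [InnerProductSpace ℂ H] (i : I) :
    H →L[ℂ] l2 I H :=
  LinearMap.mkContinuous
    { toFun := fun a => lp.single 2 i a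
      map_add' := fun a b => by
        apply lp.ext
        funext j
        by_cases h : j = i
        · subst h
          simp [lp.single_apply_self]
        · simp [lp.single_apply_ne 2 i _ h]
      map_smul' := fun c a => by
        simpa using lp.single_smul 2 i a c }
    1 (fun a => by
      simpa using le_of_eq (lp.norm_single (p := 2) (by norm_num) (fun _ : I => a) i))

@[simp] lemma inclCLM_apply (i : I) (a : H) : inclCLM H i a = lp.single 2 i a := rfl

def evalCLM (H : Type*) [NormedAddCommGroup H] [InnerProductSpace ℂ H] [CompleteSpace H]
    (i : I) : l2 I H →L[ℂ] H :=
  ContinuousLinearMap.adjoint (inclCLM H i)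

@[simp] lemma evalCLM_apply (i : I) (f : l2 I H) : evalCLM H i f = f i := by
  apply ext_inner_right ℂ
  intro v
  rw [evalCLM, ContinuousLinearMap.adjoint_inner_left]
  simpa using lp.inner_single_right (𝕜 := ℂ) i v f

lemma eval_comp_incl (k i : I) :
    (evalCLM H k).comp (inclCLM H i) = if k = i then (1 : H →L[ℂ] H) else 0 := by
  ext x
  by_cases h : k = i
  · subst h
    simp [lp.single_apply_self]
  · simp [h, lp.single_apply_ne 2 i _ h]

def projCLM (H : Type*) [NormedAddCommGroup H] [InnerProductSpace ℂ H] [CompleteSpace H]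
    (i : I) : l2 I H →L[ℂ] l2 I H :=
  (inclCLM H i).comp (evalCLM H i)

/-- The operator `ℓ²-direct-sum` action of a finite matrix of operators:
`(A u)ₖ = Σₗ A k l (u l)`. -/
def matOp {n : ℕ} {X Y : Type*} [NormedAddCommGroup X] [InnerProductSpace ℂ X] [CompleteSpace X]
    [NormedAddCommGroup Y] [InnerProductSpace ℂ Y]
    (A : Matrix (Fin n) (Fin n) (X →L[ℂ] Y)) :
    l2 (Fin n) X →L[ℂ] l2 (Fin n) Y :=
  ∑ k : Fin n, ∑ l : Fin n, (inclCLM Y k).comp ((A k l).comp (evalCLM X l))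

lemma memℓp_smul_const {H : Type*} [NormedAddCommGroup H] [InnerProductSpace ℂ H]
    (d : l2 I ℂ) (u : H) : Memℓp (fun i : I => d i • u) 2 := by
  apply memℓp_gen
  have hd : Summable fun i : I => ‖d i‖ ^ (2 : ℝ≥0∞).toReal :=
    Memℓp.summable (by norm_num) (lp.memℓp d)
  have : (fun i : I => ‖d i • u‖ ^ (2 : ℝ≥0∞).toReal)
      = fun i : I => (‖d i‖ ^ (2 : ℝ≥0∞).toReal) * ‖u‖ ^ (2 : ℝ≥0∞).toReal := by
    funext i
    rw [norm_smul, Real.mul_rpow (norm_nonneg _) (norm_nonneg _)]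
  rw [this]
  exact hd.mul_right _

/-- For `d ∈ ℓ²(I)`, the bounded operator `E_d : H → ℓ²(I;H)`, `u ↦ (d i • u)ᵢ`. -/
def ampCLM (H : Type*) [NormedAddCommGroup H] [InnerProductSpace ℂ H]
    (d : l2 I ℂ) : H →L[ℂ] l2 I H :=
  LinearMap.mkContinuous
    { toFun := fun u => ⟨fun i => d i • u, memℓp_smul_const d u⟩
      map_add' := fun u v => by
        apply lp.ext
        funext i
        simp [smul_add]
        rfl
      map_smul' := fun c u => by
        apply lp.ext
        funext i
        simp only [lp.coeFn_smul, Pi.smul_apply, RingHom.id_apply]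
        exact smul_comm (d i) c u }
    ‖d‖ (fun u => by
      have h2 : (0:ℝ) < (2 : ℝ≥0∞).toReal := by norm_num
      rw [mul_comm]
      apply le_of_eq
      have key : ‖(⟨fun i => d i • u, memℓp_smul_const d u⟩ : l2 I H)‖ ^ (2 : ℝ≥0∞).toReal
          = (‖u‖ * ‖d‖) ^ (2 : ℝ≥0∞).toReal := by
        rw [lp.norm_rpow_eq_tsum h2]
        have : ∀ i : I, ‖(⟨fun i => d i • u, memℓp_smul_const d u⟩ : l2 I H) i‖ ^ (2 : ℝ≥0∞).toReal
            = ‖u‖ ^ (2 : ℝ≥0∞).toReal * ‖d i‖ ^ (2 : ℝ≥0∞).toReal := by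
          intro i
          have : ‖(⟨fun i => d i • u, memℓp_smul_const d u⟩ : l2 I H) i‖ = ‖d i‖ * ‖u‖ := by
            change ‖d i • u‖ = _
            rw [norm_smul]
          rw [this, Real.mul_rpow (norm_nonneg _) (norm_nonneg _), mul_comm]
        rw [tsum_congr this, tsum_mul_left, Real.mul_rpow (norm_nonneg _) (norm_nonneg _)]
        congr 1
        rw [← lp.norm_rpow_eq_tsum h2 d]
      have hnn : (0:ℝ) ≤ ‖u‖ * ‖d‖ := mul_nonneg (norm_nonneg _) (norm_nonneg _)
      exact Real.rpow_left_injOn (ne_of_gt h2) (norm_nonneg _) hnn key)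



/-! ### Auxiliary lemmas -/

open scoped InnerProductSpace

section Aux

variable {I : Type*} [DecidableEq I]
variable {H : Type*} [NormedAddCommGroup H] [InnerProductSpace ℂ H] [CompleteSpace H]

@[simp] lemma ampCLM_apply (d : l2 I ℂ) (v : H) (i : I) :
    ampCLM H d v i = d i • v := rfl

lemma sum_single_apply {E : Type*} [NormedAddCommGroup E] [InnerProductSpace ℂ E]
    {n : ℕ} (g : Fin n → E) (k : Fin n) :
    (∑ j : Fin n, lp.single (E := fun _ : Fin n => E) 2 j (g j)) k = g k := by
  rw [lp.coeFn_sum]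
  simp [lp.coeFn_sum, lp.single_apply, Finset.sum_apply, Finset.sum_dite_eq]

lemma eq_sum_single {E : Type*} [NormedAddCommGroup E] [InnerProductSpace ℂ E]
    {n : ℕ} (f : l2 (Fin n) E) :
    f = ∑ k : Fin n, lp.single 2 k (f k) := by
  apply lp.ext
  funext k
  rw [sum_single_apply]

lemma norm_sq_sum_single {E : Type*} [NormedAddCommGroup E] [InnerProductSpace ℂ E]
    {n : ℕ} (g : Fin n → E) :
    ‖∑ k : Fin n, lp.single (E := fun _ : Fin n => E) 2 k (g k)‖ ^ 2
      = ∑ k : Fin n, ‖g k‖ ^ 2 := by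
  have h := lp.norm_sum_single (p := 2) (E := fun _ : Fin n => E)
    (by norm_num) g Finset.univ
  have h2 : ((2 : ℝ≥0∞).toReal) = (2 : ℝ) := by norm_num
  rw [h2] at h
  calc ‖∑ k : Fin n, lp.single (E := fun _ : Fin n => E) 2 k (g k)‖ ^ 2
      = ‖∑ k : Fin n, lp.single (E := fun _ : Fin n => E) 2 k (g k)‖ ^ (2:ℝ) := by
        rw [← Real.rpow_natCast]; norm_num
    _ = ∑ k : Fin n, ‖g k‖ ^ (2:ℝ) := h
    _ = ∑ k : Fin n, ‖g k‖ ^ 2 := by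
        refine Finset.sum_congr rfl fun k _ => ?_
        rw [← Real.rpow_natCast]; norm_num

lemma lp_norm_sq {E : Type*} [NormedAddCommGroup E] [InnerProductSpace ℂ E]
    {n : ℕ} (f : l2 (Fin n) E) : ‖f‖ ^ 2 = ∑ k : Fin n, ‖f k‖ ^ 2 := by
  conv_lhs => rw [eq_sum_single f]
  exact norm_sq_sum_single _

lemma single_sum {E : Type*} [NormedAddCommGroup E] [InnerProductSpace ℂ E]
    {n : ℕ} (k : Fin n) (g : Fin n → E) :
    lp.single (E := fun _ : Fin n => E) 2 k (∑ l : Fin n, g l)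
      = ∑ l : Fin n, lp.single 2 k (g l) := by
  apply lp.ext
  funext j
  by_cases h : j = k
  · subst h
    rw [lp.coeFn_sum]
    simp [lp.single_apply_self, lp.coeFn_sum, Finset.sum_apply]
  · rw [lp.coeFn_sum]
    simp [lp.single_apply_ne 2 k _ h, lp.coeFn_sum, Finset.sum_apply, Pi.single_eq_of_ne h]

lemma matOp_apply {n : ℕ} {X Y : Type*} [NormedAddCommGroup X] [InnerProductSpace ℂ X]
    [CompleteSpace X] [NormedAddCommGroup Y] [InnerProductSpace ℂ Y]
    (A : Matrix (Fin n) (Fin n) (X →L[ℂ] Y)) (f : l2 (Fin n) X) :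
    matOp A f = ∑ k : Fin n, lp.single 2 k (∑ l : Fin n, A k l (f l)) := by
  rw [matOp, ContinuousLinearMap.sum_apply]
  refine Finset.sum_congr rfl fun k _ => ?_
  rw [ContinuousLinearMap.sum_apply, single_sum]
  refine Finset.sum_congr rfl fun l _ => ?_
  rw [ContinuousLinearMap.comp_apply, ContinuousLinearMap.comp_apply, evalCLM_apply]
  rfl

lemma matOp_apply_coord {n : ℕ} {X Y : Type*} [NormedAddCommGroup X] [InnerProductSpace ℂ X]
    [CompleteSpace X] [NormedAddCommGroup Y] [InnerProductSpace ℂ Y]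
    (A : Matrix (Fin n) (Fin n) (X →L[ℂ] Y)) (f : l2 (Fin n) X) (k : Fin n) :
    matOp A f k = ∑ l : Fin n, A k l (f l) := by
  rw [matOp_apply, sum_single_apply]

lemma norm_sq_matOp_apply {n : ℕ} {X Y : Type*} [NormedAddCommGroup X] [InnerProductSpace ℂ X]
    [CompleteSpace X] [NormedAddCommGroup Y] [InnerProductSpace ℂ Y]
    (A : Matrix (Fin n) (Fin n) (X →L[ℂ] Y)) (f : l2 (Fin n) X) :
    ‖matOp A f‖ ^ 2 = ∑ k : Fin n, ‖∑ l : Fin n, A k l (f l)‖ ^ 2 := by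
  rw [matOp_apply, norm_sq_sum_single]

lemma inner_amp (d d' : l2 I ℂ) (v v' : H) :
    ⟪ampCLM H d v, ampCLM H d' v'⟫_ℂ = ⟪d, d'⟫_ℂ * ⟪v, v'⟫_ℂ := by
  rw [lp.inner_eq_tsum, lp.inner_eq_tsum, ← tsum_mul_right]
  refine tsum_congr fun i => ?_
  simp only [ampCLM_apply, inner_smul_left, inner_smul_right, RCLike.inner_apply]
  ring

lemma norm_amp (d : l2 I ℂ) (v : H) : ‖ampCLM H d v‖ = ‖d‖ * ‖v‖ := by
  have h := inner_amp d d v v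
  rw [inner_self_eq_norm_sq_to_K, inner_self_eq_norm_sq_to_K, inner_self_eq_norm_sq_to_K] at h
  have h3 : ‖ampCLM H d v‖ ^ 2 = ‖d‖ ^ 2 * ‖v‖ ^ 2 := by exact_mod_cast h
  nlinarith [norm_nonneg (ampCLM H d v), norm_nonneg d, norm_nonneg v,
    mul_nonneg (norm_nonneg d) (norm_nonneg v)]

lemma amp_sum_smul {n : ℕ} (b : Fin n → ℂ) (d : Fin n → l2 I ℂ) (v : H) :
    ampCLM H (∑ l : Fin n, b l • d l) v = ∑ l : Fin n, b l • ampCLM H (d l) v := by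
  apply lp.ext
  funext i
  simp only [ampCLM_apply, lp.coeFn_sum, Finset.sum_apply, lp.coeFn_smul, Pi.smul_apply]
  rw [Finset.sum_smul]
  refine Finset.sum_congr rfl fun l _ => ?_
  rw [smul_eq_mul, ← smul_smul]

lemma norm_sq_sum_of_orthogonal {E : Type*} [NormedAddCommGroup E] [InnerProductSpace ℂ E]
    {m : ℕ} (x : Fin m → E) (h : ∀ j j' : Fin m, j ≠ j' → ⟪x j, x j'⟫_ℂ = 0) :
    ‖∑ j : Fin m, x j‖ ^ 2 = ∑ j : Fin m, ‖x j‖ ^ 2 := by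
  have key : ⟪∑ j : Fin m, x j, ∑ j : Fin m, x j⟫_ℂ = ∑ j : Fin m, ⟪x j, x j⟫_ℂ := by
    rw [sum_inner]
    refine Finset.sum_congr rfl fun j _ => ?_
    rw [inner_sum]
    exact Finset.sum_eq_single j (fun b _ hb => h j b (Ne.symm hb)) (fun hj => absurd (Finset.mem_univ j) hj)
  have h2 := congrArg (fun z : ℂ => RCLike.re z) key
  rw [inner_self_eq_norm_sq] at h2
  rw [h2, map_sum]
  exact Finset.sum_congr rfl fun j _ => inner_self_eq_norm_sq (𝕜 := ℂ) (x j)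

lemma opNorm_eq_of_norm_apply_eq {X Y Z : Type*}
    [NormedAddCommGroup X] [NormedSpace ℂ X] [NormedAddCommGroup Y] [NormedSpace ℂ Y]
    [NormedAddCommGroup Z] [NormedSpace ℂ Z]
    (S : X →L[ℂ] Y) (R : X →L[ℂ] Z) (h : ∀ f, ‖S f‖ = ‖R f‖) : ‖S‖ = ‖R‖ := by
  refine le_antisymm ?_ ?_
  · exact S.opNorm_le_bound (norm_nonneg R) fun f => (h f).le.trans (R.le_opNorm f)
  · exact R.opNorm_le_bound (norm_nonneg S) fun f => (h f).ge.trans (S.le_opNorm f)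


lemma eq_of_sq_eq_sq' {a b : ℝ} (ha : 0 ≤ a) (hb : 0 ≤ b) (h : a ^ 2 = b ^ 2) : a = b := by
  rw [← Real.sqrt_sq ha, ← Real.sqrt_sq hb, h]

lemma le_of_sq_le_sq' {a b : ℝ} (ha : 0 ≤ a) (hb : 0 ≤ b) (h : a ^ 2 ≤ b ^ 2) : a ≤ b := by
  rw [← Real.sqrt_sq ha, ← Real.sqrt_sq hb]
  exact Real.sqrt_le_sqrt h

/-- Lower bound: `‖T c‖ ≤ ‖A‖ * ‖c‖` where `A = matOp (amp ∘ u)`, `T = matOp (span ∘ u)`. -/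
lemma key_ge {n : ℕ} [Nontrivial H] (u : Matrix (Fin n) (Fin n) (l2 I ℂ))
    (c : l2 (Fin n) ℂ) :
    ‖matOp (fun k l => ContinuousLinearMap.toSpanSingleton ℂ (u k l)) c‖
      ≤ ‖matOp (fun k l => ampCLM H (u k l))‖ * ‖c‖ := by
  obtain ⟨v, hv⟩ := exists_ne (0 : H)
  set e : H := ‖v‖⁻¹ • v with he
  have hev : ‖e‖ = 1 := norm_smul_inv_norm hv
  set T := matOp (fun k l => ContinuousLinearMap.toSpanSingleton ℂ (u k l)) with hT
  set A := matOp (fun k l => ampCLM H (u k l)) with hA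
  set ξ : l2 (Fin n) H := ∑ l : Fin n, lp.single 2 l (c l • e) with hξ
  have hξl : ∀ l, ξ l = c l • e := fun l => sum_single_apply _ l
  have hξnorm : ‖ξ‖ = ‖c‖ := by
    apply eq_of_sq_eq_sq' (norm_nonneg _) (norm_nonneg _)
    rw [hξ, norm_sq_sum_single, lp_norm_sq c]
    refine Finset.sum_congr rfl fun l _ => ?_
    rw [norm_smul, hev, mul_one]
  have hcoord : ∀ k, (A ξ) k = ampCLM H ((T c) k) e := by
    intro k
    rw [hA, hT]
    erw [matOp_apply_coord, matOp_apply_coord]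
    simp only [ContinuousLinearMap.toSpanSingleton_apply]
    rw [amp_sum_smul]
    refine Finset.sum_congr rfl fun l _ => ?_
    rw [hξl l, map_smul]
  have hnorm2 : ‖A ξ‖ = ‖T c‖ := by
    apply eq_of_sq_eq_sq' (norm_nonneg _) (norm_nonneg _)
    rw [lp_norm_sq, lp_norm_sq]
    refine Finset.sum_congr rfl fun k _ => ?_
    rw [hcoord k, norm_amp, hev, mul_one]
  calc ‖T c‖ = ‖A ξ‖ := hnorm2.symm
    _ ≤ ‖A‖ * ‖ξ‖ := A.le_opNorm ξ
    _ = ‖A‖ * ‖c‖ := by rw [hξnorm]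

set_option maxHeartbeats 1000000 in
/-- Upper bound: `‖A ξ‖ ≤ ‖T‖ * ‖ξ‖`. -/
lemma key_le {n : ℕ} (u : Matrix (Fin n) (Fin n) (l2 I ℂ)) (ξ : l2 (Fin n) H) :
    ‖matOp (fun k l => ampCLM H (u k l)) ξ‖
      ≤ ‖matOp (fun k l => ContinuousLinearMap.toSpanSingleton ℂ (u k l))‖ * ‖ξ‖ := by
  set T := matOp (fun k l => ContinuousLinearMap.toSpanSingleton ℂ (u k l)) with hT
  set A := matOp (fun k l => ampCLM H (u k l)) with hA
  set V := Submodule.span ℂ (Set.range fun l : Fin n => ξ l) with hV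
  haveI : FiniteDimensional ℂ V := FiniteDimensional.span_of_finite ℂ (Set.finite_range _)
  set b := stdOrthonormalBasis ℂ V with hb
  set e : Fin (Module.finrank ℂ V) → H := fun j => (b j : H) with hee
  have he_inner : ∀ j j', ⟪e j, e j'⟫_ℂ = if j = j' then 1 else 0 := by
    intro j j'
    have h1 := orthonormal_iff_ite.mp b.orthonormal j j'
    rw [Submodule.coe_inner] at h1
    exact h1
  have hej : ∀ j, ‖e j‖ = 1 := by
    intro j
    have h1 : ⟪e j, e j⟫_ℂ = 1 := by simpa using he_inner j j
    have h2 : ‖e j‖ ^ 2 = (1 : ℝ) := by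
      rw [← inner_self_eq_norm_sq (𝕜 := ℂ), h1]
      simp
    exact eq_of_sq_eq_sq' (norm_nonneg _) zero_le_one (by rw [h2]; norm_num)
  have hξmem : ∀ l, ξ l ∈ V := fun l => Submodule.subset_span ⟨l, rfl⟩
  set c : Fin (Module.finrank ℂ V) → Fin n → ℂ := fun j l => ⟪e j, ξ l⟫_ℂ with hc
  have hdecomp : ∀ l, ξ l = ∑ j, c j l • e j := by
    intro l
    have h2 : ((∑ j, (⟪b j, (⟨ξ l, hξmem l⟩ : V)⟫_ℂ) • b j : V) : H) = ξ l := by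
      rw [b.sum_repr']
    rw [← h2, Submodule.coe_sum]
    refine Finset.sum_congr rfl fun j _ => ?_
    rw [Submodule.coe_smul]
    congr 1
  set cj : Fin (Module.finrank ℂ V) → l2 (Fin n) ℂ :=
    fun j => ∑ l : Fin n, lp.single 2 l (c j l) with hcjdef
  have hcj : ∀ j l, cj j l = c j l := fun j l => sum_single_apply _ l
  have hAcoord : ∀ k, (A ξ) k = ∑ j, ampCLM H ((T (cj j)) k) (e j) := by
    intro k
    rw [hA]
    erw [matOp_apply_coord]
    calc ∑ l : Fin n, ampCLM H (u k l) (ξ l)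
        = ∑ l : Fin n, ∑ j, c j l • ampCLM H (u k l) (e j) := by
          refine Finset.sum_congr rfl fun l _ => ?_
          rw [hdecomp l, map_sum]
          exact Finset.sum_congr rfl fun j _ => map_smul _ _ _
      _ = ∑ j, ∑ l : Fin n, c j l • ampCLM H (u k l) (e j) := Finset.sum_comm
      _ = ∑ j, ampCLM H ((T (cj j)) k) (e j) := by
          refine Finset.sum_congr rfl fun j _ => ?_
          rw [hT]
          erw [matOp_apply_coord]
          simp only [ContinuousLinearMap.toSpanSingleton_apply, hcj]
          rw [amp_sum_smul]
  have hAnormsq : ‖A ξ‖ ^ 2 = ∑ j, ‖T (cj j)‖ ^ 2 := by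
    rw [lp_norm_sq]
    calc ∑ k : Fin n, ‖(A ξ) k‖ ^ 2
        = ∑ k : Fin n, ∑ j, ‖(T (cj j)) k‖ ^ 2 := by
          refine Finset.sum_congr rfl fun k _ => ?_
          rw [hAcoord k, norm_sq_sum_of_orthogonal]
          · refine Finset.sum_congr rfl fun j _ => ?_
            rw [norm_amp, hej, mul_one]
          · intro j j' hjj'
            rw [inner_amp, he_inner, if_neg hjj', mul_zero]
      _ = ∑ j, ∑ k : Fin n, ‖(T (cj j)) k‖ ^ 2 := Finset.sum_comm
      _ = ∑ j, ‖T (cj j)‖ ^ 2 := by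
          refine Finset.sum_congr rfl fun j _ => ?_
          rw [← lp_norm_sq]
  have hξnormsq : ‖ξ‖ ^ 2 = ∑ j, ‖cj j‖ ^ 2 := by
    rw [lp_norm_sq]
    calc ∑ l : Fin n, ‖ξ l‖ ^ 2
        = ∑ l : Fin n, ∑ j, ‖c j l‖ ^ 2 := by
          refine Finset.sum_congr rfl fun l _ => ?_
          rw [hdecomp l, norm_sq_sum_of_orthogonal]
          · refine Finset.sum_congr rfl fun j _ => ?_
            rw [norm_smul, hej, mul_one]
          · intro j j' hjj'
            rw [inner_smul_left, inner_smul_right, he_inner, if_neg hjj', mul_zero, mul_zero]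
      _ = ∑ j, ∑ l : Fin n, ‖c j l‖ ^ 2 := Finset.sum_comm
      _ = ∑ j, ‖cj j‖ ^ 2 := by
          refine Finset.sum_congr rfl fun j _ => ?_
          rw [lp_norm_sq]
          exact Finset.sum_congr rfl fun l _ => by rw [hcj]
  have hmain : ‖A ξ‖ ^ 2 ≤ (‖T‖ * ‖ξ‖) ^ 2 := by
    rw [mul_pow, hAnormsq, hξnormsq, Finset.mul_sum]
    refine Finset.sum_le_sum fun j _ => ?_
    have h1 := T.le_opNorm (cj j)
    have h2 : ‖T (cj j)‖ ^ 2 ≤ (‖T‖ * ‖cj j‖) ^ 2 := by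
      have := mul_nonneg (norm_nonneg T) (norm_nonneg (cj j))
      nlinarith [norm_nonneg (T (cj j))]
    calc ‖T (cj j)‖ ^ 2 ≤ (‖T‖ * ‖cj j‖) ^ 2 := h2
      _ = ‖T‖ ^ 2 * ‖cj j‖ ^ 2 := by ring
  exact le_of_sq_le_sq' (norm_nonneg _)
    (mul_nonneg (norm_nonneg _) (norm_nonneg _)) hmain


end Aux



set_option maxHeartbeats 2000000 in
/-- For `X : ℓ²(I;H) → K̃` and `φ(u) := X ∘ E_u`:
(a) if `X` is injective then `φ` is injective;
(b) if `X` is isometric then `φ` is completely isometric. -/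
theorem opToCBmap_injective_and_isometric
    {Kt : Type*} [NormedAddCommGroup Kt] [InnerProductSpace ℂ Kt] [CompleteSpace Kt]
    [Nontrivial H]
    (X : l2 I H →L[ℂ] Kt) :
    (Function.Injective X →
      Function.Injective fun u : l2 I ℂ => X.comp (ampCLM H u)) ∧
    (Isometry X →
      ∀ n : ℕ, 1 ≤ n → ∀ u : Matrix (Fin n) (Fin n) (l2 I ℂ),
        ‖matOp (fun k l => X.comp (ampCLM H (u k l)))‖
          = ‖matOp (fun k l => ContinuousLinearMap.toSpanSingleton ℂ (u k l))‖) := by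
  constructor
  · -- (a) injectivity
    intro hX u u' huu'
    obtain ⟨v, hv⟩ := exists_ne (0 : H)
    have h0 : X (ampCLM H u v) = X (ampCLM H u' v) := by
      have := congrArg (fun S : H →L[ℂ] Kt => S v) huu'
      simpa using this
    have h2 : ampCLM H u v = ampCLM H u' v := hX h0
    apply lp.ext
    funext i
    have h3 : u i • v = u' i • v := by
      have := congrArg (fun f : l2 I H => f i) h2
      simpa using this
    have h4 : (u i - u' i) • v = 0 := by rw [sub_smul, h3, sub_self]
    have h5 := (smul_eq_zero.mp h4).resolve_right hv
    exact sub_eq_zero.mp h5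
  · -- (b) complete isometry
    intro hX n _ u
    have hXn : ∀ y : l2 I H, ‖X y‖ = ‖y‖ := fun y =>
      hX.norm_map_of_map_zero (map_zero X) y
    have step1 : ‖matOp (fun k l => X.comp (ampCLM H (u k l)))‖
        = ‖matOp (fun k l => ampCLM H (u k l))‖ := by
      apply opNorm_eq_of_norm_apply_eq
      intro f
      apply eq_of_sq_eq_sq' (norm_nonneg _) (norm_nonneg _)
      erw [norm_sq_matOp_apply, norm_sq_matOp_apply]
      refine Finset.sum_congr rfl fun k _ => ?_
      have hs : ∑ l : Fin n, (X.comp (ampCLM H (u k l))) (f l)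
          = X (∑ l : Fin n, ampCLM H (u k l) (f l)) := by
        rw [map_sum]
        rfl
      rw [hs, hXn]
    rw [step1]
    refine le_antisymm ?_ ?_
    · exact ContinuousLinearMap.opNorm_le_bound
        (matOp (fun k l => ampCLM H (u k l)))
        (norm_nonneg (matOp (fun k l => ContinuousLinearMap.toSpanSingleton ℂ (u k l))))
        (fun ξ => key_le u ξ)
    · exact ContinuousLinearMap.opNorm_le_bound
        (matOp (fun k l => ContinuousLinearMap.toSpanSingleton ℂ (u k l)))
        (norm_nonneg (matOp (fun k l => ampCLM H (u k l))))
        (fun c => key_ge (H := H) u c)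

end
end
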